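/- arXiv:2210.12788 — 6 statements merged into one kernel-verified Lean document; each statement's English description precedes it below -/
import Mathlib

section
/- Let G be a d-regular graph on n vertices with d ≥ 600 whose adjacency matrix A satisfies ‖A − (d/n)J‖ ≤ 2√(d−1); in particular, this holds for any d-regular Ramanujan graph, i.e. one all of whose adjacency eigenvalues other than d have absolute value at most 2√(d−1). Then every stable state of the homogeneous Kuramoto model on G is fully synchronized (hence G is globally synchronizing). -/
/-!
Write `γ = ‖A - (d/n) J‖` and `z = ∑ₓ exp (i θₓ)`. Testing the Hessian of a stable state against
`cos θ` and `sin θ` gives `2 ∑ A cos (θₓ - θᵧ) ≥ ∑ A (1 + cos 2(θₓ - θᵧ))`, and comparing `A` with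
`(d/n) J` on both sides yields `d (d - 3γ) ≤ 2 q²` for the mean field `q = d |z| / n`.
Rotate the phases so that `z = |z|`, with representatives in `[-π, π]`. At a vertex `y` the local
field `∑ₓ A e^{i(θₓ - θᵧ)}` is a nonnegative real (equilibrium, and stability against a point
mass), and it differs from `q e^{-iθᵧ}` by the `y`-th entry of `(A - (d/n) J)(cos θ - 1 + i sin θ)`.
Hence `(3/5) q min(|θᵧ|, 1)` is at most the modulus of that entry; summing squares,
`(9/25) q² ∑ min(|θᵧ|, 1)² ≤ 4 γ² ∑ min(|θᵧ|, 1)²`, and for `d ≥ 600`, `γ ≤ 2√(d-1)` this forces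
every `θᵧ = 0`.
-/

open Finset

noncomputable def opNorm {n : ℕ} (M : Matrix (Fin n) (Fin n) ℝ) : ℝ :=
  ‖LinearMap.toContinuousLinearMap (Matrix.toEuclideanLin M)‖

def onesMat (n : ℕ) : Matrix (Fin n) (Fin n) ℝ := Matrix.of fun _ _ => 1

def IsAdjMatrix {n : ℕ} (A : Matrix (Fin n) (Fin n) ℝ) : Prop :=
  A.IsSymm ∧ (∀ x y, A x y = 0 ∨ A x y = 1) ∧ ∀ x, A x x = 0

def IsEquilibrium {n : ℕ} (A : Matrix (Fin n) (Fin n) ℝ) (θ : Fin n → ℝ) : Prop :=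
  ∀ y, ∑ x, A x y * Real.sin (θ x - θ y) = 0

def IsStable {n : ℕ} (A : Matrix (Fin n) (Fin n) ℝ) (θ : Fin n → ℝ) : Prop :=
  IsEquilibrium A θ ∧
    ∀ f : Fin n → ℝ, 0 ≤ ∑ x, ∑ y, A x y * Real.cos (θ x - θ y) * (f x - f y) ^ 2

def FullySync {n : ℕ} (θ : Fin n → ℝ) : Prop :=
  ∀ x y, ∃ k : ℤ, θ x - θ y = 2 * Real.pi * k

def IsExpander {n : ℕ} (A : Matrix (Fin n) (Fin n) ℝ) (d α : ℝ) : Prop :=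
  opNorm (A - (d / n) • onesMat n) ≤ α * d

noncomputable def lapCentered {n : ℕ} (A : Matrix (Fin n) (Fin n) ℝ) (d : ℝ) :
    Matrix (Fin n) (Fin n) ℝ :=
  Matrix.diagonal (fun x => ∑ y, A x y) - A - d • (1 : Matrix (Fin n) (Fin n) ℝ)
    + (d / n) • onesMat n

def IsExpander5 {n : ℕ} (A : Matrix (Fin n) (Fin n) ℝ) (d α cm cp : ℝ) : Prop :=
  IsExpander A d α ∧
    (lapCentered A d - (cm * d) • (1 : Matrix (Fin n) (Fin n) ℝ)).PosSemidef ∧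
    ((cp * d) • (1 : Matrix (Fin n) (Fin n) ℝ) - lapCentered A d).PosSemidef

noncomputable def daido {n : ℕ} (k : ℕ) (θ : Fin n → ℝ) : ℂ :=
  (n : ℂ)⁻¹ * ∑ x, Complex.exp (Complex.I * k * θ x)

noncomputable def sFun (t : ℝ) : ℝ := if |t| ≤ Real.pi / 2 then Real.sin t ^ 2 else 1

noncomputable def Cset {n : ℕ} (θ : Fin n → ℝ) (ψ : ℝ) : Finset (Fin n) :=
  Finset.univ.filter fun x => ψ ≤ |θ x|

def eXY {n : ℕ} (A : Matrix (Fin n) (Fin n) ℝ) (X Y : Finset (Fin n)) : ℝ :=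
  ∑ x ∈ X, ∑ y ∈ Y, A x y

noncomputable def kerK (a b : ℝ) : ℝ := Real.sin (|a| - min |b| (Real.pi / 2))

def matGraph {n : ℕ} (A : Matrix (Fin n) (Fin n) ℝ) : SimpleGraph (Fin n) where
  Adj x y := x ≠ y ∧ A x y = 1 ∧ A y x = 1
  symm := ⟨fun x y ⟨h1, h2, h3⟩ => ⟨h1.symm, h3, h2⟩⟩
  loopless := ⟨fun x ⟨h1, _⟩ => h1 rfl⟩

noncomputable def erMeasure (n : ℕ) (p : ℝ) (hp : p ≤ 1) :
    MeasureTheory.Measure ({e : Fin n × Fin n // e.1 < e.2} → Bool) :=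
  MeasureTheory.Measure.pi fun _ =>
    (PMF.bernoulli (Real.toNNReal p) (Real.toNNReal_le_one.mpr hp)).toMeasure

def erAdj (n : ℕ) (ω : {e : Fin n × Fin n // e.1 < e.2} → Bool) :
    Matrix (Fin n) (Fin n) ℝ :=
  Matrix.of fun x y =>
    if h : x < y then (if ω ⟨(x, y), h⟩ then 1 else 0)
    else if h : y < x then (if ω ⟨(y, x), h⟩ then 1 else 0) else 0

open Real
open scoped Matrix

section OperatorNorm

variable {n : ℕ}

lemma opNorm_nonneg (M : Matrix (Fin n) (Fin n) ℝ) : 0 ≤ opNorm M := norm_nonneg _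

lemma norm_toLp_sq (f : Fin n → ℝ) : ‖WithLp.toLp 2 f‖ ^ 2 = f ⬝ᵥ f := by
  rw [← real_inner_self_eq_norm_sq, EuclideanSpace.inner_toLp_toLp, star_trivial]

lemma norm_mulVec_le (M : Matrix (Fin n) (Fin n) ℝ) (f : Fin n → ℝ) :
    ‖WithLp.toLp 2 (M *ᵥ f)‖ ≤ opNorm M * ‖WithLp.toLp 2 f‖ :=
  (LinearMap.toContinuousLinearMap (Matrix.toEuclideanLin M)).le_opNorm (WithLp.toLp 2 f)

lemma mulVec_dotProduct_mulVec_le (M : Matrix (Fin n) (Fin n) ℝ) (f : Fin n → ℝ) :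
    M *ᵥ f ⬝ᵥ M *ᵥ f ≤ opNorm M ^ 2 * (f ⬝ᵥ f) := by
  rw [← norm_toLp_sq, ← norm_toLp_sq, ← mul_pow]
  exact pow_le_pow_left₀ (norm_nonneg _) (norm_mulVec_le M f) 2

lemma abs_dotProduct_mulVec_le (M : Matrix (Fin n) (Fin n) ℝ) (f : Fin n → ℝ) :
    |f ⬝ᵥ M *ᵥ f| ≤ opNorm M * (f ⬝ᵥ f) := by
  have hCS := abs_real_inner_le_norm (WithLp.toLp 2 (M *ᵥ f)) (WithLp.toLp 2 f)
  rw [EuclideanSpace.inner_toLp_toLp, star_trivial] at hCS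
  calc |f ⬝ᵥ M *ᵥ f| ≤ ‖WithLp.toLp 2 (M *ᵥ f)‖ * ‖WithLp.toLp 2 f‖ := hCS
    _ ≤ opNorm M * ‖WithLp.toLp 2 f‖ * ‖WithLp.toLp 2 f‖ := by
      gcongr; exact norm_mulVec_le M f
    _ = opNorm M * (f ⬝ᵥ f) := by rw [mul_assoc, ← sq, norm_toLp_sq]

end OperatorNorm

section Centering

variable {n : ℕ} (A : Matrix (Fin n) (Fin n) ℝ) (D : ℝ)

lemma smul_onesMat_mulVec (c : ℝ) (f : Fin n → ℝ) :
    (c • onesMat n) *ᵥ f = fun _ => c * ∑ x, f x := by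
  ext y
  simp [Matrix.mulVec, dotProduct, onesMat, Finset.mul_sum]

lemma mulVec_eq_centered_add (f : Fin n → ℝ) :
    A *ᵥ f = (A - (D / n) • onesMat n) *ᵥ f + fun _ => D / n * ∑ x, f x := by
  rw [Matrix.sub_mulVec, smul_onesMat_mulVec, sub_add_cancel]

lemma dotProduct_mulVec_eq_centered_add (f : Fin n → ℝ) :
    f ⬝ᵥ A *ᵥ f = f ⬝ᵥ (A - (D / n) • onesMat n) *ᵥ f + D / n * (∑ x, f x) ^ 2 := by
  rw [mulVec_eq_centered_add A D, dotProduct_add]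
  simp only [dotProduct, ← Finset.sum_mul, add_right_inj]
  ring

lemma centered_mulVec_one [NeZero n] (hreg : ∀ x, ∑ y, A x y = D) :
    (A - (D / n) • onesMat n) *ᵥ 1 = 0 := by
  have hn : (n : ℝ) ≠ 0 := Nat.cast_ne_zero.mpr (NeZero.ne n)
  rw [Matrix.sub_mulVec, smul_onesMat_mulVec]
  ext x
  simp [Matrix.mulVec, dotProduct, hreg, hn]

end Centering

section Coupling

variable {n : ℕ} (A : Matrix (Fin n) (Fin n) ℝ)

noncomputable def coupling (θ : Fin n → ℝ) : ℝ := ∑ x, ∑ y, A x y * cos (θ x - θ y)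

lemma coupling_eq (θ : Fin n → ℝ) :
    coupling A θ = cos ∘ θ ⬝ᵥ A *ᵥ (cos ∘ θ) + sin ∘ θ ⬝ᵥ A *ᵥ (sin ∘ θ) := by
  simp only [coupling, dotProduct, Matrix.mulVec, Function.comp_apply, Finset.mul_sum,
    ← Finset.sum_add_distrib, cos_sub]
  refine Finset.sum_congr rfl fun x _ => Finset.sum_congr rfl fun y _ => ?_
  ring

lemma abs_coupling_sub_le (D : ℝ) (θ : Fin n → ℝ) :
    |coupling A θ - D / n * ((∑ x, cos (θ x)) ^ 2 + (∑ x, sin (θ x)) ^ 2)|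
      ≤ opNorm (A - (D / n) • onesMat n) * n := by
  set Δ := A - (D / n) • onesMat n
  have hnorm : cos ∘ θ ⬝ᵥ cos ∘ θ + sin ∘ θ ⬝ᵥ sin ∘ θ = n := by
    simp [dotProduct, ← Finset.sum_add_distrib, ← sq]
  calc _ = |cos ∘ θ ⬝ᵥ Δ *ᵥ (cos ∘ θ) + sin ∘ θ ⬝ᵥ Δ *ᵥ (sin ∘ θ)| := by
        rw [coupling_eq, dotProduct_mulVec_eq_centered_add A D,
          dotProduct_mulVec_eq_centered_add A D]
        simp only [Function.comp_apply]
        congr 1; ring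
    _ ≤ opNorm Δ * (cos ∘ θ ⬝ᵥ cos ∘ θ) + opNorm Δ * (sin ∘ θ ⬝ᵥ sin ∘ θ) :=
      (abs_add_le _ _).trans
        (add_le_add (abs_dotProduct_mulVec_le _ _) (abs_dotProduct_mulVec_le _ _))
    _ = opNorm Δ * n := by rw [← mul_add, hnorm]

end Coupling

section Stability

variable {n : ℕ} {A : Matrix (Fin n) (Fin n) ℝ} {θ : Fin n → ℝ}

lemma IsStable.sum_add_coupling_two_mul_le (hθ : IsStable A θ) :
    ∑ x, ∑ y, A x y + coupling A (fun x => 2 * θ x) ≤ 2 * coupling A θ := by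
  have hpt : ∀ x y, A x y * cos (θ x - θ y) * ((cos ∘ θ) x - (cos ∘ θ) y) ^ 2
      + A x y * cos (θ x - θ y) * ((sin ∘ θ) x - (sin ∘ θ) y) ^ 2
      = 2 * (A x y * cos (θ x - θ y)) - (A x y + A x y * cos (2 * θ x - 2 * θ y)) := by
    intro x y
    have hdouble : cos (2 * θ x - 2 * θ y) = 2 * cos (θ x - θ y) ^ 2 - 1 := by
      rw [← cos_two_mul, mul_sub]
    have hchord : (cos (θ x) - cos (θ y)) ^ 2 + (sin (θ x) - sin (θ y)) ^ 2
        = 2 - 2 * cos (θ x - θ y) := by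
      rw [cos_sub]
      linear_combination sin_sq_add_cos_sq (θ x) + sin_sq_add_cos_sq (θ y)
    simp only [Function.comp_apply]
    linear_combination A x y * cos (θ x - θ y) * hchord + A x y * hdouble
  have h := add_nonneg (hθ.2 (cos ∘ θ)) (hθ.2 (sin ∘ θ))
  simp only [← Finset.sum_add_distrib, hpt, Finset.sum_sub_distrib, ← Finset.mul_sum] at h
  simp only [Finset.sum_add_distrib] at h
  simp only [coupling]
  linarith

lemma IsStable.mul_sub_three_mul_le [NeZero n] {D : ℝ} (hD : 0 ≤ D)
    (hreg : ∀ x, ∑ y, A x y = D) (hθ : IsStable A θ) :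
    D * (D - 3 * opNorm (A - (D / n) • onesMat n))
      ≤ 2 * ((D / n * ∑ x, cos (θ x)) ^ 2 + (D / n * ∑ x, sin (θ x)) ^ 2) := by
  set γ := opNorm (A - (D / n) • onesMat n)
  set S := (∑ x, cos (θ x)) ^ 2 + (∑ x, sin (θ x)) ^ 2
  have hsum : ∑ x, ∑ y, A x y = n * D := by simp [hreg]
  have h1 := abs_le.mp (abs_coupling_sub_le A D θ)
  have h2 := abs_le.mp (abs_coupling_sub_le A D (fun x => 2 * θ x))
  have hS2 : 0 ≤ D / n * ((∑ x, cos (2 * θ x)) ^ 2 + (∑ x, sin (2 * θ x)) ^ 2) := by positivity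
  have hmain : n * (D - 3 * γ) ≤ 2 * (D / n) * S := by
    linarith [hθ.sum_add_coupling_two_mul_le]
  have hn : (n : ℝ) ≠ 0 := Nat.cast_ne_zero.mpr (NeZero.ne n)
  calc D * (D - 3 * γ) = D / n * (n * (D - 3 * γ)) := by field_simp
    _ ≤ D / n * (2 * (D / n) * S) := by gcongr
    _ = _ := by ring

end Stability

section LocalField

variable {n : ℕ} {A : Matrix (Fin n) (Fin n) ℝ} {θ : Fin n → ℝ}

lemma sum_mul_sin_sub_eq (hsymm : A.IsSymm) (y : Fin n) :
    ∑ x, A x y * sin (θ x - θ y)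
      = cos (θ y) * (A *ᵥ (sin ∘ θ)) y - sin (θ y) * (A *ᵥ (cos ∘ θ)) y := by
  simp only [Matrix.mulVec, dotProduct, Function.comp_apply, Finset.mul_sum,
    ← Finset.sum_sub_distrib, sin_sub, hsymm.apply y]
  refine Finset.sum_congr rfl fun x _ => ?_
  ring

lemma sum_mul_cos_sub_eq (hsymm : A.IsSymm) (y : Fin n) :
    ∑ x, A x y * cos (θ x - θ y)
      = cos (θ y) * (A *ᵥ (cos ∘ θ)) y + sin (θ y) * (A *ᵥ (sin ∘ θ)) y := by
  simp only [Matrix.mulVec, dotProduct, Function.comp_apply, Finset.mul_sum,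
    ← Finset.sum_add_distrib, cos_sub, hsymm.apply y]
  refine Finset.sum_congr rfl fun x _ => ?_
  ring

lemma IsStable.sum_mul_cos_sub_nonneg (hsymm : A.IsSymm) (hdiag : ∀ x, A x x = 0)
    (hθ : IsStable A θ) (y : Fin n) : 0 ≤ ∑ x, A x y * cos (θ x - θ y) := by
  set δ : Fin n → ℝ := Pi.single y 1
  have hpt : ∀ x z, A x z * cos (θ x - θ z) * (δ x - δ z) ^ 2
      = (if x = y then A y z * cos (θ y - θ z) else 0)
        + (if z = y then A x y * cos (θ x - θ y) else 0) := by
    intro x z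
    by_cases hx : x = y <;> by_cases hz : z = y <;> simp [δ, hx, hz, hdiag]
  have hswap : ∑ z, A y z * cos (θ y - θ z) = ∑ x, A x y * cos (θ x - θ y) :=
    Finset.sum_congr rfl fun x _ => by rw [hsymm.apply x y, ← cos_neg, neg_sub]
  have h := hθ.2 δ
  simp only [hpt, Finset.sum_add_distrib, Finset.sum_ite_irrel, Finset.sum_const_zero,
    Finset.sum_ite_eq', Finset.mem_univ, if_true, hswap] at h
  linarith

end LocalField

-- The hypotheses say that `e^{-it} (q + v + i u)` is a nonnegative real, so `q e^{-it}` lies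
-- within `√(u² + v²)` of `[0, ∞)`.
lemma sq_mul_max_abs_sin_neg_cos_le {q t u v : ℝ} (hq : 0 ≤ q)
    (heq : q * sin t = cos t * u - sin t * v) (hstab : 0 ≤ cos t * (v + q) + sin t * u) :
    (q * max |sin t| (-cos t)) ^ 2 ≤ u ^ 2 + v ^ 2 := by
  have hrot : (cos t * u - sin t * v) ^ 2 + (cos t * v + sin t * u) ^ 2 = u ^ 2 + v ^ 2 := by
    linear_combination (u ^ 2 + v ^ 2) * sin_sq_add_cos_sq t
  rcases le_total (-cos t) |sin t| with h | h
  · rw [max_eq_left h, mul_pow, sq_abs, ← mul_pow, heq]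
    nlinarith [sq_nonneg (cos t * v + sin t * u)]
  · rw [max_eq_right h]
    have h0 : 0 ≤ q * -cos t := mul_nonneg hq ((abs_nonneg _).trans h)
    have h1 : q * -cos t ≤ cos t * v + sin t * u := by linarith
    nlinarith [sq_nonneg (cos t * u - sin t * v)]

-- Jordan's inequality up to `π / 2`; beyond it `max |sin t| |cos t| ≥ 1 / √2`.
lemma three_fifths_mul_min_le_max {t : ℝ} (ht : |t| ≤ π) :
    3 / 5 * min |t| 1 ≤ max |sin t| (-cos t) := by
  rcases le_total |t| (π / 2) with h | h
  · have hsin : sin |t| ≤ |sin t| := by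
      rcases abs_choice t with ht' | ht' <;> rw [ht']
      · exact le_abs_self _
      · rw [sin_neg]; exact neg_le_abs _
    have hπ : 3 / 5 ≤ 2 / π := by rw [le_div_iff₀ pi_pos]; linarith [pi_lt_d2]
    calc 3 / 5 * min |t| 1 ≤ 2 / π * |t| := by gcongr; exact min_le_left _ _
      _ ≤ sin |t| := mul_le_sin (abs_nonneg t) h
      _ ≤ max |sin t| (-cos t) := hsin.trans (le_max_left _ _)
  · have hcos : cos t ≤ 0 := by
      rw [← cos_abs]; exact cos_nonpos_of_pi_div_two_le_of_le h (by linarith [pi_pos])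
    have hmax : 3 / 5 ≤ max |sin t| (-cos t) := by
      by_contra! hlt
      obtain ⟨hs, hc⟩ := max_lt_iff.mp hlt
      nlinarith [sin_sq_add_cos_sq t, sq_abs (sin t), abs_nonneg (sin t)]
    calc 3 / 5 * min |t| 1 ≤ 3 / 5 * 1 := by gcongr; exact min_le_right _ _
      _ ≤ max |sin t| (-cos t) := by linarith

lemma sin_sq_add_one_sub_cos_sq_le (t : ℝ) : sin t ^ 2 + (1 - cos t) ^ 2 ≤ 4 * min |t| 1 ^ 2 := by
  have hchord : sin t ^ 2 + (1 - cos t) ^ 2 = 2 * (1 - cos t) := by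
    linear_combination sin_sq_add_cos_sq t
  have hquad : 1 - cos t ≤ t ^ 2 / 2 := by linarith [one_sub_sq_div_two_le_cos (x := t)]
  rw [hchord]
  rcases le_total |t| 1 with h | h
  · rw [min_eq_left h, sq_abs]; nlinarith [sq_nonneg t]
  · rw [min_eq_right h]; linarith [neg_one_le_cos t]

-- `M` kills constants, so `M *ᵥ cos ∘ θ = M *ᵥ (cos ∘ θ - 1)` is small when `θ` is near `0`.
lemma mulVec_sin_dotProduct_add_mulVec_cos_dotProduct_le {n : ℕ} {M : Matrix (Fin n) (Fin n) ℝ}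
    (hM : M *ᵥ 1 = 0) (θ : Fin n → ℝ) :
    M *ᵥ (sin ∘ θ) ⬝ᵥ M *ᵥ (sin ∘ θ) + M *ᵥ (cos ∘ θ) ⬝ᵥ M *ᵥ (cos ∘ θ)
      ≤ 4 * opNorm M ^ 2 * ∑ y, min |θ y| 1 ^ 2 := by
  have hcos : M *ᵥ (cos ∘ θ) = M *ᵥ (cos ∘ θ - 1) := by rw [Matrix.mulVec_sub, hM, sub_zero]
  calc _ ≤ opNorm M ^ 2 * (sin ∘ θ ⬝ᵥ sin ∘ θ)
        + opNorm M ^ 2 * ((cos ∘ θ - 1) ⬝ᵥ (cos ∘ θ - 1)) := by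
        rw [hcos]
        exact add_le_add (mulVec_dotProduct_mulVec_le _ _) (mulVec_dotProduct_mulVec_le _ _)
    _ = opNorm M ^ 2 * ∑ y, (sin (θ y) ^ 2 + (1 - cos (θ y)) ^ 2) := by
        simp only [dotProduct, ← mul_add, ← Finset.sum_add_distrib, Pi.sub_apply, Pi.one_apply,
          Function.comp_apply]
        congr 1
        refine Finset.sum_congr rfl fun y _ => ?_
        ring
    _ ≤ opNorm M ^ 2 * ∑ y, 4 * min |θ y| 1 ^ 2 := by
        gcongr with y
        exact sin_sq_add_one_sub_cos_sq_le (θ y)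
    _ = 4 * opNorm M ^ 2 * ∑ y, min |θ y| 1 ^ 2 := by rw [← Finset.mul_sum]; ring

section Rigidity

variable {n : ℕ} {A : Matrix (Fin n) (Fin n) ℝ} {D : ℝ} {θ : Fin n → ℝ}

lemma IsStable.sq_mul_min_abs_le (hsymm : A.IsSymm) (hdiag : ∀ x, A x x = 0)
    (hθ : IsStable A θ) (hsin : ∑ x, sin (θ x) = 0) (hq : 0 ≤ D / n * ∑ x, cos (θ x))
    {y : Fin n} (hy : |θ y| ≤ π) :
    (3 / 5 * (D / n * ∑ x, cos (θ x)) * min |θ y| 1) ^ 2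
      ≤ ((A - (D / n) • onesMat n) *ᵥ (sin ∘ θ)) y ^ 2
        + ((A - (D / n) • onesMat n) *ᵥ (cos ∘ θ)) y ^ 2 := by
  set q := D / n * ∑ x, cos (θ x)
  have hAs : (A *ᵥ (sin ∘ θ)) y = ((A - (D / n) • onesMat n) *ᵥ (sin ∘ θ)) y := by
    rw [mulVec_eq_centered_add A D]
    simp [hsin]
  have hAc : (A *ᵥ (cos ∘ θ)) y = ((A - (D / n) • onesMat n) *ᵥ (cos ∘ θ)) y + q := by
    rw [mulVec_eq_centered_add A D]
    rfl
  have heq := hθ.1 y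
  have hstab := hθ.sum_mul_cos_sub_nonneg hsymm hdiag y
  rw [sum_mul_sin_sub_eq hsymm, hAs, hAc] at heq
  rw [sum_mul_cos_sub_eq hsymm, hAs, hAc] at hstab
  calc (3 / 5 * q * min |θ y| 1) ^ 2 = (q * (3 / 5 * min |θ y| 1)) ^ 2 := by ring
    _ ≤ (q * max |sin (θ y)| (-cos (θ y))) ^ 2 := by
      gcongr
      exact three_fifths_mul_min_le_max hy
    _ ≤ _ := sq_mul_max_abs_sin_neg_cos_le hq (by linarith) (by linarith)

theorem IsStable.eq_zero_of_opNorm_sq_lt (hsymm : A.IsSymm) (hdiag : ∀ x, A x x = 0)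
    (hreg : ∀ x, ∑ y, A x y = D) (hθ : IsStable A θ) (hπ : ∀ x, |θ x| ≤ π)
    (hsin : ∑ x, sin (θ x) = 0) (hq : 0 ≤ D / n * ∑ x, cos (θ x))
    (hgap : 100 * opNorm (A - (D / n) • onesMat n) ^ 2 < 9 * (D / n * ∑ x, cos (θ x)) ^ 2) :
    θ = 0 := by
  rcases eq_zero_or_neZero n with rfl | _
  · ext x; exact x.elim0
  set Δ := A - (D / n) • onesMat n
  set q := D / n * ∑ x, cos (θ x)
  set M := ∑ y, min |θ y| 1 ^ 2
  have hlower : (3 / 5 * q) ^ 2 * M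
      ≤ Δ *ᵥ (sin ∘ θ) ⬝ᵥ Δ *ᵥ (sin ∘ θ) + Δ *ᵥ (cos ∘ θ) ⬝ᵥ Δ *ᵥ (cos ∘ θ) := by
    simp only [M, dotProduct, Finset.mul_sum, ← Finset.sum_add_distrib, ← sq]
    gcongr with y
    rw [← mul_pow]
    exact hθ.sq_mul_min_abs_le hsymm hdiag hsin hq (hπ y)
  have hupper := mulVec_sin_dotProduct_add_mulVec_cos_dotProduct_le
    (centered_mulVec_one A D hreg) θ
  have hM : M = 0 := by
    have hM0 : 0 ≤ M := by positivity
    nlinarith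
  ext y
  have hy := (Finset.sum_eq_zero_iff_of_nonneg fun y _ => sq_nonneg (min |θ y| 1)).mp hM y
    (Finset.mem_univ y)
  rw [sq_eq_zero_iff] at hy
  rcases min_choice |θ y| 1 with h | h <;> rw [h] at hy
  · exact abs_eq_zero.mp hy
  · exact absurd hy one_ne_zero

end Rigidity

section Rotation

variable {n : ℕ}

lemma IsStable.of_coe_sub_eq {A : Matrix (Fin n) (Fin n) ℝ} {θ θ' : Fin n → ℝ}
    (hθ : IsStable A θ) (h : ∀ x y, ((θ' x - θ' y : ℝ) : Real.Angle) = (θ x - θ y : ℝ)) :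
    IsStable A θ' := by
  have hsin : ∀ x y, sin (θ' x - θ' y) = sin (θ x - θ y) := fun x y => by
    rw [← Real.Angle.sin_coe, h, Real.Angle.sin_coe]
  have hcos : ∀ x y, cos (θ' x - θ' y) = cos (θ x - θ y) := fun x y => by
    rw [← Real.Angle.cos_coe, h, Real.Angle.cos_coe]
  exact ⟨fun y => by simpa only [hsin] using hθ.1 y, fun f => by simpa only [hcos] using hθ.2 f⟩

lemma exists_rotation (θ : Fin n → ℝ) :
    ∃ φ : ℝ, ∃ θ' : Fin n → ℝ, (∀ x, (θ' x : Real.Angle) = (θ x - φ : ℝ)) ∧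
      (∀ x, |θ' x| ≤ π) ∧ ∑ x, sin (θ' x) = 0 ∧ 0 ≤ ∑ x, cos (θ' x) := by
  set z : ℂ := ∑ x, Complex.exp (θ x * Complex.I)
  have hrot : ∑ x, Complex.exp ((θ x - z.arg : ℝ) * Complex.I) = ‖z‖ := by
    calc _ = z * Complex.exp (-(z.arg * Complex.I)) := by
          rw [Finset.sum_mul]
          refine Finset.sum_congr rfl fun x _ => ?_
          rw [← Complex.exp_add]
          push_cast
          ring_nf
      _ = ‖z‖ * Complex.exp (z.arg * Complex.I) * Complex.exp (-(z.arg * Complex.I)) := by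
          rw [Complex.norm_mul_exp_arg_mul_I]
      _ = ‖z‖ := by rw [mul_assoc, ← Complex.exp_add, add_neg_cancel, Complex.exp_zero, mul_one]
  refine ⟨z.arg, fun x => ((θ x - z.arg : ℝ) : Real.Angle).toReal,
    fun x => Real.Angle.coe_toReal _, fun x => Real.Angle.abs_toReal_le_pi _, ?_, ?_⟩
  · have h := congrArg Complex.im hrot
    simp only [Complex.im_sum, Complex.exp_ofReal_mul_I_im, Complex.ofReal_im] at h
    simpa only [Real.Angle.sin_toReal, Real.Angle.sin_coe] using h
  · have h := congrArg Complex.re hrot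
    simp only [Complex.re_sum, Complex.exp_ofReal_mul_I_re, Complex.ofReal_re] at h
    simpa only [Real.Angle.cos_toReal, Real.Angle.cos_coe, h] using norm_nonneg z

end Rotation

lemma two_hundred_mul_sq_lt_of_le_two_sqrt {d γ : ℝ} (hd : 600 ≤ d) (hγ0 : 0 ≤ γ)
    (hγ : γ ≤ 2 * √(d - 1)) : 200 * γ ^ 2 < 9 * d * (d - 3 * γ) := by
  have hγsq : γ ^ 2 ≤ 4 * (d - 1) := by
    calc γ ^ 2 ≤ (2 * √(d - 1)) ^ 2 := by gcongr
      _ = 4 * (d - 1) := by rw [mul_pow, sq_sqrt (by linarith)]; norm_num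
  have hγd : γ ≤ d / 12 := by nlinarith
  nlinarith

theorem ramanujan_globally_synchronizing {n : ℕ} (A : Matrix (Fin n) (Fin n) ℝ)
    (hA : IsAdjMatrix A) (d : ℕ) (hd : 600 ≤ d)
    (hreg : ∀ x, ∑ y, A x y = (d : ℝ))
    (hexp : opNorm (A - ((d : ℝ) / n) • onesMat n) ≤ 2 * Real.sqrt ((d : ℝ) - 1))
    (θ : Fin n → ℝ) (hθ : IsStable A θ) : FullySync θ := by
  intro x y
  have : NeZero n := ⟨x.pos.ne'⟩
  obtain ⟨φ, θ', hθ'θ, hπ, hsin, hcos⟩ := exists_rotation θ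
  have hθ' : IsStable A θ' := hθ.of_coe_sub_eq fun a b => by
    simp only [Real.Angle.coe_sub, hθ'θ]
    abel
  have horder := hθ'.mul_sub_three_mul_le d.cast_nonneg hreg
  have hgap := two_hundred_mul_sq_lt_of_le_two_sqrt (by exact_mod_cast hd) (opNorm_nonneg _) hexp
  rw [hsin] at horder
  have hzero : θ' = 0 := hθ'.eq_zero_of_opNorm_sq_lt hA.1 hA.2.2 hreg hπ hsin (by positivity)
    (by linarith)
  have hφ : ∀ x, (θ x : Real.Angle) = φ := fun x => by
    have h := hθ'θ x
    rwa [hzero, Pi.zero_apply, Real.Angle.coe_zero, Real.Angle.coe_sub, eq_comm, sub_eq_zero] at h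
  exact Real.Angle.angle_eq_iff_two_pi_dvd_sub.mp ((hφ x).trans (hφ y).symm)
end

section
/- Let θ be a stable state of the homogeneous Kuramoto model on an (n,d,α)-expander graph G, taking values in (−π, π], and suppose ρ₁(θ) is real and strictly positive. Then |ρ₂(θ)| ≥ 1 − 2α²/ρ₁(θ)². -/
open Finset

/-!
Write `s = sin ∘ θ`, `c = cos ∘ θ` and `B = A - (d/n) J`. Since `ρ₁` is real, `J s = 0` and
`J c = n ρ₁`, so the equilibrium equations `c_y (A s)_y = s_y (A c)_y` become
`d ρ₁ s_y = c_y (B s)_y - s_y (B c)_y`. As `s_y² + c_y² = 1`, Cauchy–Schwarz bounds the square of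
the right-hand side by `(B s)_y² + (B c)_y²`; summing over `y` and using `‖B‖ ≤ α d` gives
`d² ρ₁² ‖s‖² ≤ α² d² (‖s‖² + ‖c‖²) = α² d² n`. Finally `Re ρ₂ = 1 - 2 ‖s‖² / n`.
-/

open Real

section

open Matrix

variable {n : ℕ}

lemma sum_sq_mulVec_le_of_opNorm_le {M : Matrix (Fin n) (Fin n) ℝ} {C : ℝ}
    (h : opNorm M ≤ C) (v : Fin n → ℝ) :
    ∑ i, (M *ᵥ v) i ^ 2 ≤ C ^ 2 * ∑ i, v i ^ 2 := by
  set T := LinearMap.toContinuousLinearMap (toEuclideanLin M)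
  have hT : ‖T (WithLp.toLp 2 v)‖ ≤ C * ‖WithLp.toLp 2 v‖ :=
    (T.le_opNorm _).trans (mul_le_mul_of_nonneg_right h (norm_nonneg _))
  have := pow_le_pow_left₀ (norm_nonneg _) hT 2
  rwa [mul_pow, EuclideanSpace.real_norm_sq_eq, EuclideanSpace.real_norm_sq_eq] at this

lemma daido_eq (k : ℕ) (θ : Fin n → ℝ) :
    daido k θ = (n : ℂ)⁻¹ * ∑ x, Complex.exp ((k * θ x : ℝ) * Complex.I) := by
  unfold daido; push_cast; ring_nf

lemma daido_re (k : ℕ) (θ : Fin n → ℝ) :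
    (daido k θ).re = (∑ x, cos (k * θ x)) / n := by
  rw [daido_eq, ← Complex.ofReal_natCast, ← Complex.ofReal_inv, Complex.re_ofReal_mul,
    Complex.re_sum]
  simp only [Complex.exp_ofReal_mul_I_re]
  ring

lemma daido_im (k : ℕ) (θ : Fin n → ℝ) :
    (daido k θ).im = (∑ x, sin (k * θ x)) / n := by
  rw [daido_eq, ← Complex.ofReal_natCast, ← Complex.ofReal_inv, Complex.im_ofReal_mul,
    Complex.im_sum]
  simp only [Complex.exp_ofReal_mul_I_im]
  ring

lemma daido_two_re (θ : Fin n → ℝ) :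
    (daido 2 θ).re = (n - 2 * ∑ x, sin (θ x) ^ 2) / n := by
  have hcos : ∀ x, cos ((2 : ℕ) * θ x) = 1 - 2 * sin (θ x) ^ 2 := fun x => by
    rw [Nat.cast_ofNat, cos_two_mul, cos_sq']; ring
  simp only [daido_re, hcos, sum_sub_distrib, ← mul_sum, sum_const,
    card_univ, Fintype.card_fin, nsmul_eq_mul, mul_one]

lemma vecMul_sub_smul_onesMat_apply (A : Matrix (Fin n) (Fin n) ℝ) (t : ℝ)
    (v : Fin n → ℝ) (y : Fin n) :
    (v ᵥ* (A - t • onesMat n)) y = (v ᵥ* A) y - t * ∑ x, v x := by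
  simp [vecMul, dotProduct, onesMat, mul_sub, sum_sub_distrib, mul_sum, mul_comm]

lemma IsEquilibrium.cos_mul_vecMul_sin {A : Matrix (Fin n) (Fin n) ℝ} {θ : Fin n → ℝ}
    (h : IsEquilibrium A θ) (y : Fin n) :
    cos (θ y) * ((sin ∘ θ) ᵥ* A) y = sin (θ y) * ((cos ∘ θ) ᵥ* A) y := by
  have := h y
  simp only [sin_sub] at this
  simp only [vecMul, dotProduct, Function.comp, mul_sum]
  rw [← sub_eq_zero, ← sum_sub_distrib, ← this]
  exact sum_congr rfl fun x _ => by ring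

lemma IsEquilibrium.cos_mul_vecMul_sub_sin_mul_vecMul {A : Matrix (Fin n) (Fin n) ℝ}
    {θ : Fin n → ℝ} (h : IsEquilibrium A θ) (t : ℝ) (y : Fin n) :
    cos (θ y) * ((sin ∘ θ) ᵥ* (A - t • onesMat n)) y
        - sin (θ y) * ((cos ∘ θ) ᵥ* (A - t • onesMat n)) y
      = t * (sin (θ y) * ∑ x, cos (θ x) - cos (θ y) * ∑ x, sin (θ x)) := by
  simp only [vecMul_sub_smul_onesMat_apply, Function.comp_apply]
  linear_combination h.cos_mul_vecMul_sin y

lemma sq_mul_sub_mul_le {s c u v : ℝ} (h : s ^ 2 + c ^ 2 = 1) :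
    (c * u - s * v) ^ 2 ≤ u ^ 2 + v ^ 2 := by
  nlinarith [sq_nonneg (s * u + c * v)]

lemma IsEquilibrium.sq_mul_sum_sin_sq_le {A : Matrix (Fin n) (Fin n) ℝ}
    {θ : Fin n → ℝ} (h : IsEquilibrium A θ) (hA : A.IsSymm) {t C : ℝ}
    (hB : opNorm (A - t • onesMat n) ≤ C) (hsin : ∑ x, sin (θ x) = 0) :
    (t * ∑ x, cos (θ x)) ^ 2 * ∑ x, sin (θ x) ^ 2 ≤ C ^ 2 * n := by
  set B := A - t • onesMat n
  have hBsymm : B.IsSymm := hA.sub ((IsSymm.ext fun _ _ => rfl).smul t)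
  have hvecMul : ∀ v, v ᵥ* B = B *ᵥ v := fun v => by rw [← mulVec_transpose, hBsymm.eq]
  have hpoint : ∀ y, (t * ∑ x, cos (θ x)) ^ 2 * sin (θ y) ^ 2
      ≤ (B *ᵥ (sin ∘ θ)) y ^ 2 + (B *ᵥ (cos ∘ θ)) y ^ 2 := fun y => by
    have := h.cos_mul_vecMul_sub_sin_mul_vecMul t y
    rw [hsin, mul_zero, sub_zero, hvecMul, hvecMul] at this
    rw [← mul_pow, mul_assoc, mul_comm _ (sin _), ← this]
    exact sq_mul_sub_mul_le (sin_sq_add_cos_sq _)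
  calc (t * ∑ x, cos (θ x)) ^ 2 * ∑ x, sin (θ x) ^ 2
      ≤ ∑ y, ((B *ᵥ (sin ∘ θ)) y ^ 2 + (B *ᵥ (cos ∘ θ)) y ^ 2) := by
        rw [mul_sum]; exact sum_le_sum fun y _ => hpoint y
    _ ≤ C ^ 2 * ∑ x, sin (θ x) ^ 2 + C ^ 2 * ∑ x, cos (θ x) ^ 2 := by
        rw [sum_add_distrib]
        exact add_le_add (sum_sq_mulVec_le_of_opNorm_le hB _)
          (sum_sq_mulVec_le_of_opNorm_le hB _)
    _ = C ^ 2 * n := by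
        rw [← mul_add, ← sum_add_distrib]
        simp [sin_sq_add_cos_sq]

end

theorem rho_two_lower_bound_general {n : ℕ} (A : Matrix (Fin n) (Fin n) ℝ)
    (hA : IsAdjMatrix A) (d α : ℝ) (hd : 0 < d)
    (hexp : IsExpander A d α) (θ : Fin n → ℝ) (hθ : IsStable A θ)
    (him : (daido 1 θ).im = 0) (hre : 0 < (daido 1 θ).re) :
    ‖daido 2 θ‖ ≥ 1 - 2 * α ^ 2 / (daido 1 θ).re ^ 2 := by
  set ρ := (daido 1 θ).re
  have hn : (n : ℝ) ≠ 0 := fun hn => by simp [ρ, daido_re, hn] at hre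
  have hsin : ∑ x, sin (θ x) = 0 := by simpa [daido_im, hn] using him
  have hcos : d / n * ∑ x, cos (θ x) = d * ρ := by
    simp only [ρ, daido_re, Nat.cast_one, one_mul]; field_simp
  have key := hθ.1.sq_mul_sum_sin_sq_le hA.1 hexp hsin
  rw [hcos] at key
  have hsq : ρ ^ 2 * ∑ x, sin (θ x) ^ 2 ≤ α ^ 2 * n :=
    le_of_mul_le_mul_left (by linarith) (pow_pos hd 2)
  have hS : 2 * α ^ 2 / ρ ^ 2 ≥ 2 * (∑ x, sin (θ x) ^ 2) / n := by
    rw [ge_iff_le, div_le_div_iff₀ (by positivity) (by positivity)]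
    linarith
  calc ‖daido 2 θ‖ ≥ (daido 2 θ).re := Complex.re_le_norm _
    _ = 1 - 2 * (∑ x, sin (θ x) ^ 2) / n := by rw [daido_two_re]; field_simp
    _ ≥ 1 - 2 * α ^ 2 / ρ ^ 2 := by linarith

theorem rho_two_lower_bound {n : ℕ} (A : Matrix (Fin n) (Fin n) ℝ)
    (hA : IsAdjMatrix A) (d α : ℝ) (hd : 0 < d) (hα : 0 < α)
    (hexp : IsExpander A d α) (θ : Fin n → ℝ) (hθ : IsStable A θ)
    (hrange : ∀ x, θ x ∈ Set.Ioc (-Real.pi) Real.pi)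
    (him : (daido 1 θ).im = 0) (hre : 0 < (daido 1 θ).re) :
    ‖daido 2 θ‖ ≥ 1 - 2 * α ^ 2 / (daido 1 θ).re ^ 2 :=
  rho_two_lower_bound_general A hA d α hd hexp θ hθ him hre
end

section
/- Kernel stability condition: let θ be a stable state of the homogeneous Kuramoto model on a graph G, taking values in (−π, π], with ρ₁(θ) real and non-negative. Then for every y ∈ V, Σ_{x∈V} A_{x,y} K(θ_x, θ_y) ≥ 0. -/
open Finset

/-! Fix a node `y` with angle `ψ = θ y` and weights `w x = A x y`. Stability, tested on the
indicator of `y`, gives `∑ w cos(φ - ψ) ≥ 0`; equilibrium gives `∑ w sin(φ - ψ) = 0`.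
If `|ψ| ≤ π/2`, then `cos ψ ≥ 0`, so folding `φ` to `|φ|` can only raise `sin(φ - |ψ|)`: the
kernel dominates `± sin(φ - ψ)` term by term, and its sum dominates the vanishing equilibrium sum.
If `|ψ| > π/2`, the kernel is `-cos φ`, and the two conditions make the local field `∑ w e^{iφ}` a
nonnegative multiple of `e^{iψ}`, whose real part is `≤ 0` because `cos ψ ≤ 0`. -/

open Real

theorem Real.sin_sub_le_sin_abs_sub {φ a : ℝ} (hφ : |φ| ≤ π) (ha : 0 ≤ cos a) :
    sin (φ - a) ≤ sin (|φ| - a) := by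
  rcases le_or_gt 0 φ with hφ0 | hφ0
  · rw [abs_of_nonneg hφ0]
  · have hsin : sin φ ≤ 0 := sin_nonpos_of_nonpos_of_neg_pi_le hφ0.le (neg_le_of_abs_le hφ)
    rw [abs_of_neg hφ0, sin_sub, sin_sub, sin_neg, cos_neg]
    nlinarith [mul_nonneg (neg_nonneg.2 hsin) ha]

theorem kerK_of_abs_le {a b : ℝ} (hb : |b| ≤ π / 2) : kerK a b = sin (|a| - |b|) := by
  rw [kerK, min_eq_left hb]

theorem kerK_of_pi_div_two_le {a b : ℝ} (hb : π / 2 ≤ |b|) : kerK a b = -cos a := by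
  rw [kerK, min_eq_right hb, sin_sub_pi_div_two, cos_abs]

section WeightedSums

variable {ι : Type*} (s : Finset ι) (w φ : ι → ℝ) (ψ : ℝ)

theorem sum_mul_cos_eq :
    ∑ x ∈ s, w x * cos (φ x) =
      cos ψ * ∑ x ∈ s, w x * cos (φ x - ψ) - sin ψ * ∑ x ∈ s, w x * sin (φ x - ψ) := by
  rw [mul_sum, mul_sum, ← sum_sub_distrib]
  refine sum_congr rfl fun x _ => ?_
  conv_lhs => rw [← sub_add_cancel (φ x) ψ, cos_add]
  ring

variable {s w φ ψ}

theorem sum_mul_kerK_nonneg_of_abs_le (hw : ∀ x ∈ s, 0 ≤ w x) (hφ : ∀ x ∈ s, |φ x| ≤ π)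
    (hψ : |ψ| ≤ π / 2) (heq : ∑ x ∈ s, w x * sin (φ x - ψ) = 0) :
    0 ≤ ∑ x ∈ s, w x * kerK (φ x) ψ := by
  have hcos : 0 ≤ cos |ψ| := cos_nonneg_of_mem_Icc ⟨by linarith [abs_nonneg ψ, pi_pos], hψ⟩
  simp only [kerK_of_abs_le hψ]
  rcases le_or_gt 0 ψ with hψ0 | hψ0
  · rw [← heq]
    refine sum_le_sum fun x hx => mul_le_mul_of_nonneg_left ?_ (hw x hx)
    rw [abs_of_nonneg hψ0] at hcos ⊢
    exact sin_sub_le_sin_abs_sub (hφ x hx) hcos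
  · have hflip : ∀ x, sin (-φ x - -ψ) = -sin (φ x - ψ) := fun x => by
      rw [← sin_neg, neg_sub_neg, neg_sub]
    have hneg : ∑ x ∈ s, w x * sin (-φ x - -ψ) = 0 := by
      simp only [hflip, mul_neg, sum_neg_distrib, heq, neg_zero]
    rw [← hneg]
    refine sum_le_sum fun x hx => mul_le_mul_of_nonneg_left ?_ (hw x hx)
    rw [abs_of_neg hψ0] at hcos ⊢
    have hle := sin_sub_le_sin_abs_sub (φ := -φ x) (by rw [abs_neg]; exact hφ x hx) hcos
    rwa [abs_neg] at hle

theorem sum_mul_cos_nonpos (hψ : π / 2 ≤ |ψ|) (hψπ : |ψ| ≤ π)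
    (heq : ∑ x ∈ s, w x * sin (φ x - ψ) = 0) (hstab : 0 ≤ ∑ x ∈ s, w x * cos (φ x - ψ)) :
    ∑ x ∈ s, w x * cos (φ x) ≤ 0 := by
  have hcos : cos ψ ≤ 0 := by
    rw [← cos_abs]
    exact cos_nonpos_of_pi_div_two_le_of_le hψ (by linarith [pi_pos])
  rw [sum_mul_cos_eq s w φ ψ, heq, mul_zero, sub_zero]
  exact mul_nonpos_of_nonpos_of_nonneg hcos hstab

theorem sum_mul_kerK_nonneg (hw : ∀ x ∈ s, 0 ≤ w x) (hφ : ∀ x ∈ s, |φ x| ≤ π) (hψ : |ψ| ≤ π)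
    (heq : ∑ x ∈ s, w x * sin (φ x - ψ) = 0) (hstab : 0 ≤ ∑ x ∈ s, w x * cos (φ x - ψ)) :
    0 ≤ ∑ x ∈ s, w x * kerK (φ x) ψ := by
  rcases le_total |ψ| (π / 2) with hψ' | hψ'
  · exact sum_mul_kerK_nonneg_of_abs_le hw hφ hψ' heq
  · simp only [kerK_of_pi_div_two_le hψ', mul_neg, sum_neg_distrib, neg_nonneg]
    exact sum_mul_cos_nonpos hψ' hψ heq hstab

end WeightedSums

theorem sum_sum_mul_sq_sub_ite {ι R : Type*} [Fintype ι] [DecidableEq ι] [CommRing R]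
    (F : ι → ι → R) (y : ι) :
    ∑ x, ∑ z, F x z * ((if x = y then 1 else 0) - (if z = y then 1 else 0)) ^ 2 =
      ∑ z, F y z + ∑ x, F x y - 2 * F y y := by
  have hsq : ∀ x z : ι, ((if x = y then (1 : R) else 0) - (if z = y then 1 else 0)) ^ 2 =
      (if x = y then 1 else 0) + (if z = y then 1 else 0) -
        2 * (if x = y then (if z = y then 1 else 0) else 0) := by
    intro x z
    split_ifs <;> ring
  simp only [hsq, mul_sub, mul_add, sum_sub_distrib, sum_add_distrib, mul_ite, mul_one, mul_zero,
    sum_ite_eq', mem_univ, if_true, sum_ite_irrel, sum_const_zero]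
  ring

theorem IsStable.sum_mul_cos_nonneg {n : ℕ} {A : Matrix (Fin n) (Fin n) ℝ} {θ : Fin n → ℝ}
    (hθ : IsStable A θ) (hA : A.IsSymm) (y : Fin n) (hy : 0 ≤ A y y) :
    0 ≤ ∑ x, A x y * cos (θ x - θ y) := by
  have hrow : ∑ z, A y z * cos (θ y - θ z) = ∑ x, A x y * cos (θ x - θ y) :=
    sum_congr rfl fun x _ => by rw [hA.apply, ← cos_neg, neg_sub]
  have hquad := hθ.2 fun x => if x = y then 1 else 0
  rw [sum_sum_mul_sq_sub_ite (fun x z => A x z * cos (θ x - θ z)), hrow, sub_self, cos_zero]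
    at hquad
  linarith

theorem kernel_stability_general {n : ℕ} (A : Matrix (Fin n) (Fin n) ℝ)
    (hA : IsAdjMatrix A) (θ : Fin n → ℝ) (hθ : IsStable A θ)
    (hrange : ∀ x, θ x ∈ Set.Ioc (-Real.pi) Real.pi) :
    ∀ y, 0 ≤ ∑ x, A x y * kerK (θ x) (θ y) := by
  obtain ⟨hsymm, h01, hdiag⟩ := hA
  have hθπ : ∀ x, |θ x| ≤ π := fun x => abs_le.2 ⟨(hrange x).1.le, (hrange x).2⟩
  intro y
  refine sum_mul_kerK_nonneg (fun x _ => ?_) (fun x _ => hθπ x) (hθπ y) (hθ.1 y)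
    (hθ.sum_mul_cos_nonneg hsymm y (hdiag y).ge)
  rcases h01 x y with h | h <;> simp [h]

theorem kernel_stability {n : ℕ} (A : Matrix (Fin n) (Fin n) ℝ)
    (hA : IsAdjMatrix A) (θ : Fin n → ℝ) (hθ : IsStable A θ)
    (hrange : ∀ x, θ x ∈ Set.Ioc (-Real.pi) Real.pi)
    (him : (daido 1 θ).im = 0) (hre : 0 ≤ (daido 1 θ).re) :
    ∀ y, 0 ≤ ∑ x, A x y * kerK (θ x) (θ y) :=
  kernel_stability_general A hA θ hθ hrange
end

section
/- Half-circle lemma: let θ be a stable state of the homogeneous Kuramoto model on a connected graph G, taking values in (−π, π], with ρ₁(θ) real and non-negative. If |θ_x| < π/2 for every x ∈ V, then θ_x = 0 for every x ∈ V. -/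
open Finset

/-!
At a vertex where the phase is maximal, every term of the equilibrium equation
`∑ x, A x y * sin (θ x - θ y) = 0` is nonpositive as long as all phases lie in an open
half-circle, so every neighbour shares the maximal phase. By connectedness the state is
constant, and then `Im ρ₁ = sin θ` vanishes only at `θ = 0` on `(-π/2, π/2)`.
-/

theorem SimpleGraph.Reachable.of_adj_imp {V : Type*} {G : SimpleGraph V} {p : V → Prop}
    (hp : ∀ u v, G.Adj u v → p u → p v) {u v : V} (h : G.Reachable u v) (hu : p u) : p v := by
  obtain ⟨w⟩ := h
  induction w with
  | nil => exact hu
  | cons hadj _ ih => exact ih (hp _ _ hadj hu)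

theorem IsAdjMatrix.nonneg {n : ℕ} {A : Matrix (Fin n) (Fin n) ℝ} (hA : IsAdjMatrix A)
    (x y : Fin n) : 0 ≤ A x y := by
  rcases hA.2.1 x y with h | h <;> simp [h]

theorem IsEquilibrium.eq_of_isMaxOn {n : ℕ} {A : Matrix (Fin n) (Fin n) ℝ} {θ : Fin n → ℝ}
    (hθ : IsEquilibrium A θ) (hA : ∀ x y, 0 ≤ A x y) (hspread : ∀ x y, θ x - θ y < Real.pi)
    {y : Fin n} (hmax : ∀ z, θ z ≤ θ y) {x : Fin n} (hxy : A x y ≠ 0) : θ x = θ y := by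
  have hterm_nonpos : ∀ z ∈ univ, A z y * Real.sin (θ z - θ y) ≤ 0 := fun z _ =>
    mul_nonpos_of_nonneg_of_nonpos (hA z y)
      (Real.sin_nonpos_of_nonpos_of_neg_pi_le (by linarith [hmax z])
        (by linarith [hspread y z]))
  have hterm : A x y * Real.sin (θ x - θ y) = 0 :=
    (sum_eq_zero_iff_of_nonpos hterm_nonpos).mp (hθ y) x (mem_univ x)
  have hsin : Real.sin (θ x - θ y) = 0 := (mul_eq_zero.mp hterm).resolve_left hxy
  have := (Real.sin_eq_zero_iff_of_lt_of_lt (by linarith [hspread y x]) (hspread x y)).mp hsin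
  linarith

theorem daido_const {n : ℕ} (hn : n ≠ 0) (k : ℕ) (c : ℝ) :
    daido k (fun _ : Fin n => c) = Complex.exp (Complex.I * k * c) := by
  simp [daido, hn]

theorem half_circle_lemma_general {n : ℕ} (A : Matrix (Fin n) (Fin n) ℝ)
    (hA : IsAdjMatrix A) (hconn : (matGraph A).Connected)
    (θ : Fin n → ℝ) (hθ : IsStable A θ)
    (him : (daido 1 θ).im = 0)
    (hhalf : ∀ x, |θ x| < Real.pi / 2) :
    ∀ x, θ x = 0 := by
  have hne : Nonempty (Fin n) := hconn.nonempty
  obtain ⟨y₀, -, hmax⟩ := exists_max_image univ θ univ_nonempty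
  have hspread : ∀ x y, θ x - θ y < Real.pi := fun x y => by
    linarith [(abs_lt.mp (hhalf x)).2, (abs_lt.mp (hhalf y)).1]
  have hconst : θ = fun _ => θ y₀ := by
    funext x
    refine (hconn y₀ x).of_adj_imp (p := fun x => θ x = θ y₀) (fun u v huv hu => ?_) rfl
    have hvu : θ v = θ u :=
      hθ.1.eq_of_isMaxOn hA.nonneg hspread (fun z => hu ▸ hmax z (mem_univ z))
        (by rw [huv.2.2]; exact one_ne_zero)
    rw [hvu, hu]
  have hsin : Real.sin (θ y₀) = 0 := by
    rw [hconst, daido_const (Fin.pos_iff_nonempty.mpr hne).ne'] at him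
    simpa [Complex.exp_im] using him
  have hy₀ := abs_lt.mp (hhalf y₀)
  have hzero : θ y₀ = 0 :=
    (Real.sin_eq_zero_iff_of_lt_of_lt (by linarith [Real.pi_pos]) (by linarith [Real.pi_pos])).mp hsin
  intro x
  rw [hconst, hzero]

theorem half_circle_lemma {n : ℕ} (A : Matrix (Fin n) (Fin n) ℝ)
    (hA : IsAdjMatrix A) (hconn : (matGraph A).Connected)
    (θ : Fin n → ℝ) (hθ : IsStable A θ)
    (hrange : ∀ x, θ x ∈ Set.Ioc (-Real.pi) Real.pi)
    (him : (daido 1 θ).im = 0) (hre : 0 ≤ (daido 1 θ).re)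
    (hhalf : ∀ x, |θ x| < Real.pi / 2) :
    ∀ x, θ x = 0 :=
  half_circle_lemma_general A hA hconn θ hθ him hhalf
end

section
/- If G is an (n,d,α,c⁻,c⁺)-expander graph, then for every subset X ⊆ V with density ρ = |X|/n, (1 + c⁻(1 − ρ) − α) d |X| ≤ e(X, V) ≤ (1 + c⁺(1 − ρ) + α) d |X|. -/
open Finset

/-! With `g` the indicator vector of `X` and `f = g - ρ𝟙`, the centred Laplacian `Δ_L` is
symmetric and kills constants, so `⟪f, Δ_L f⟫ = ⟪g, Δ_L g⟫ = e(X,V) - e(X,X) - d|X| + (d/n)|X|²`,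
while `‖f‖² = |X|(1 - ρ)`; the Loewner bounds on `Δ_L` therefore pin down `e(X,V) - e(X,X)`.
The expansion bound applied to `g` gives `|e(X,X) - (d/n)|X|²| ≤ αd|X|`. -/

open scoped Matrix RealInnerProductSpace

section QuadraticForm

variable {ι : Type*} [Fintype ι]

lemma indicator_dotProduct_mulVec_indicator (M : Matrix ι ι ℝ) (X Y : Finset ι) :
    (X : Set ι).indicator 1 ⬝ᵥ (M *ᵥ (Y : Set ι).indicator 1) = ∑ x ∈ X, ∑ y ∈ Y, M x y := by
  classical
  simp only [dotProduct, Matrix.mulVec, Set.indicator_apply, Finset.mem_coe, Pi.one_apply, ite_mul,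
    mul_ite, one_mul, mul_one, zero_mul, mul_zero, Finset.sum_ite_mem, Finset.univ_inter]

lemma indicator_dotProduct_indicator (X : Finset ι) :
    (X : Set ι).indicator 1 ⬝ᵥ (X : Set ι).indicator (1 : ι → ℝ) = #X := by
  classical
  simpa [Matrix.one_apply] using indicator_dotProduct_mulVec_indicator (1 : Matrix ι ι ℝ) X X

lemma centered_indicator_dotProduct_self (X : Finset ι) :
    ((X : Set ι).indicator (1 : ι → ℝ) - ((#X : ℝ) / Fintype.card ι) • (1 : ι → ℝ)) ⬝ᵥ
        ((X : Set ι).indicator 1 - ((#X : ℝ) / Fintype.card ι) • (1 : ι → ℝ)) =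
      #X * (1 - #X / Fintype.card ι) := by
  set c : ℝ := #X / Fintype.card ι
  have hpoint : ∀ x, ((X : Set ι).indicator (1 : ι → ℝ) x - c) ^ 2
      = (X : Set ι).indicator 1 x * (1 - 2 * c) + c ^ 2 := by
    intro x
    by_cases hx : x ∈ X <;> simp [hx]
    ring
  simp only [dotProduct, Pi.sub_apply, Pi.smul_apply, Pi.one_apply, smul_eq_mul, mul_one, ← sq,
    hpoint, Finset.sum_add_distrib, ← Finset.sum_mul, Finset.sum_const, Finset.card_univ,
    nsmul_eq_mul, Finset.sum_indicator_subset _ (Finset.subset_univ X)]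
  rcases eq_or_ne (Fintype.card ι) 0 with hι | hι
  · have hX : #X = 0 := Nat.le_zero.mp (hι ▸ Finset.card_le_univ X)
    simp [c, hX]
  · simp only [c]
    field_simp
    ring

lemma dotProduct_mulVec_sub_smul_one {M : Matrix ι ι ℝ} (hM : M.IsHermitian)
    (hM1 : M *ᵥ 1 = 0) (g : ι → ℝ) (c : ℝ) :
    (g - c • 1) ⬝ᵥ (M *ᵥ (g - c • 1)) = g ⬝ᵥ (M *ᵥ g) := by
  have h1M : 1 ᵥ* M = 0 := by
    rw [← Matrix.mulVec_transpose, ← Matrix.conjTranspose_eq_transpose_of_trivial, hM.eq, hM1]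
  rw [Matrix.mulVec_sub, Matrix.mulVec_smul, hM1, smul_zero, sub_zero, sub_dotProduct,
    smul_dotProduct, Matrix.dotProduct_mulVec 1, h1M, zero_dotProduct, smul_zero, sub_zero]

variable [DecidableEq ι]

lemma mul_dotProduct_self_le_of_posSemidef_sub_smul_one {M : Matrix ι ι ℝ} {c : ℝ}
    (h : (M - c • 1).PosSemidef) (f : ι → ℝ) : c * (f ⬝ᵥ f) ≤ f ⬝ᵥ (M *ᵥ f) := by
  have := h.dotProduct_mulVec_nonneg f
  rw [star_trivial, Matrix.sub_mulVec, Matrix.smul_mulVec, Matrix.one_mulVec, dotProduct_sub,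
    dotProduct_smul, smul_eq_mul] at this
  linarith

lemma dotProduct_mulVec_le_of_posSemidef_smul_one_sub {M : Matrix ι ι ℝ} {c : ℝ}
    (h : (c • 1 - M).PosSemidef) (f : ι → ℝ) : f ⬝ᵥ (M *ᵥ f) ≤ c * (f ⬝ᵥ f) := by
  have := h.dotProduct_mulVec_nonneg f
  rw [star_trivial, Matrix.sub_mulVec, Matrix.smul_mulVec, Matrix.one_mulVec, dotProduct_sub,
    dotProduct_smul, smul_eq_mul] at this
  linarith

end QuadraticForm

section Expander

variable {n : ℕ}

lemma abs_dotProduct_mulVec_le_opNorm (M : Matrix (Fin n) (Fin n) ℝ) (f : Fin n → ℝ) :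
    |f ⬝ᵥ (M *ᵥ f)| ≤ opNorm M * (f ⬝ᵥ f) := by
  set v : EuclideanSpace ℝ (Fin n) := (WithLp.equiv 2 _).symm f
  have hquad : f ⬝ᵥ (M *ᵥ f) = ⟪v, Matrix.toEuclideanLin M v⟫ := by
    rw [dotProduct_comm]; rfl
  have hnorm : f ⬝ᵥ f = ‖v‖ ^ 2 := by
    rw [← real_inner_self_eq_norm_sq]; rfl
  rw [hquad, hnorm]
  calc |⟪v, Matrix.toEuclideanLin M v⟫| ≤ ‖v‖ * ‖Matrix.toEuclideanLin M v‖ :=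
        abs_real_inner_le_norm _ _
    _ ≤ ‖v‖ * (opNorm M * ‖v‖) := by
        gcongr
        exact (LinearMap.toContinuousLinearMap (Matrix.toEuclideanLin M)).le_opNorm v
    _ = opNorm M * ‖v‖ ^ 2 := by ring

lemma IsExpander.abs_eXY_self_sub_le {A : Matrix (Fin n) (Fin n) ℝ} {d α : ℝ}
    (h : IsExpander A d α) (X : Finset (Fin n)) :
    |eXY A X X - d / n * #X ^ 2| ≤ α * d * #X := by
  set g : Fin n → ℝ := (X : Set (Fin n)).indicator 1
  have hquad : g ⬝ᵥ ((A - (d / n) • onesMat n) *ᵥ g) = eXY A X X - d / n * #X ^ 2 := by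
    rw [indicator_dotProduct_mulVec_indicator]
    simp [eXY, onesMat, Finset.sum_sub_distrib]
    ring
  have hbound := abs_dotProduct_mulVec_le_opNorm (A - (d / n) • onesMat n) g
  rw [hquad, indicator_dotProduct_indicator] at hbound
  exact hbound.trans (mul_le_mul_of_nonneg_right h (Nat.cast_nonneg _))

lemma lapCentered_mulVec_one (A : Matrix (Fin n) (Fin n) ℝ) (d : ℝ) :
    lapCentered A d *ᵥ 1 = 0 := by
  funext x
  have hn : (n : ℝ) ≠ 0 := by have := x.pos; positivity
  simp only [lapCentered, Matrix.add_mulVec, Matrix.sub_mulVec, Matrix.smul_mulVec,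
    Matrix.one_mulVec]
  simp [Matrix.mulVec, dotProduct, onesMat, Matrix.diagonal_apply]
  field_simp
  ring

lemma indicator_dotProduct_lapCentered_mulVec_indicator (A : Matrix (Fin n) (Fin n) ℝ) (d : ℝ)
    (X : Finset (Fin n)) :
    (X : Set (Fin n)).indicator 1 ⬝ᵥ (lapCentered A d *ᵥ (X : Set (Fin n)).indicator 1) =
      eXY A X univ - eXY A X X - d * #X + d / n * #X ^ 2 := by
  rw [indicator_dotProduct_mulVec_indicator]
  simp [lapCentered, eXY, Matrix.diagonal_apply, Matrix.one_apply, onesMat,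
    Finset.sum_sub_distrib, Finset.sum_add_distrib]
  ring

lemma IsExpander5.lapCentered_isHermitian {A : Matrix (Fin n) (Fin n) ℝ} {d α cm cp : ℝ}
    (h : IsExpander5 A d α cm cp) : (lapCentered A d).IsHermitian := by
  simpa using h.2.1.isHermitian.add (Matrix.isHermitian_one.smul (IsSelfAdjoint.all (cm * d)))

end Expander

theorem expander_degree_sum_general {n : ℕ} (A : Matrix (Fin n) (Fin n) ℝ)
    (d α cm cp : ℝ) (hexp : IsExpander5 A d α cm cp) (X : Finset (Fin n)) :
    (1 + cm * (1 - (X.card : ℝ) / n) - α) * d * X.card ≤ eXY A X Finset.univ ∧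
      eXY A X Finset.univ ≤ (1 + cp * (1 - (X.card : ℝ) / n) + α) * d * X.card := by
  set f : Fin n → ℝ := (X : Set (Fin n)).indicator 1 - ((#X : ℝ) / n) • 1
  have hquad : f ⬝ᵥ (lapCentered A d *ᵥ f) =
      eXY A X univ - eXY A X X - d * #X + d / n * #X ^ 2 := by
    rw [dotProduct_mulVec_sub_smul_one hexp.lapCentered_isHermitian (lapCentered_mulVec_one A d),
      indicator_dotProduct_lapCentered_mulVec_indicator]
  have hnorm : f ⬝ᵥ f = #X * (1 - #X / n) := by
    simpa only [Fintype.card_fin] using centered_indicator_dotProduct_self X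
  have hlower := mul_dotProduct_self_le_of_posSemidef_sub_smul_one hexp.2.1 f
  have hupper := dotProduct_mulVec_le_of_posSemidef_smul_one_sub hexp.2.2 f
  rw [hquad, hnorm] at hlower hupper
  obtain ⟨hinner_lower, hinner_upper⟩ := abs_le.mp (hexp.1.abs_eXY_self_sub_le X)
  constructor <;> linarith

theorem expander_degree_sum {n : ℕ} (A : Matrix (Fin n) (Fin n) ℝ)
    (hA : IsAdjMatrix A) (d α cm cp : ℝ) (hd : 0 < d) (hα : 0 < α)
    (hexp : IsExpander5 A d α cm cp) (X : Finset (Fin n)) :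
    (1 + cm * (1 - (X.card : ℝ) / n) - α) * d * X.card ≤ eXY A X Finset.univ ∧
      eXY A X Finset.univ ≤ (1 + cp * (1 - (X.card : ℝ) / n) + α) * d * X.card :=
  expander_degree_sum_general A d α cm cp hexp X
end

section
/- Let θ : V → (−π, π] be a state on a graph with n vertices, let M ≥ 0 be an integer, let π/2 = β₀ > β₁ > ⋯ > β_M ≥ 0 be angles, and let 0 ≤ c₀ ≤ c₁ ≤ ⋯ ≤ c_M be real numbers (with the convention c₋₁ = 0) such that |C_{β_k}(θ)| ≥ c_k for every 0 ≤ k ≤ M. Then Σ_{x∈V} s(θ_x) ≥ Σ_{k=0}^{M} (c_k − c_{k−1}) sin²(β_k) ≥ c_M sin²(β_M). -/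
/-!
Abel summation rewrites both sides in terms of the layer sizes:
`∑ₖ (cₖ - cₖ₋₁) wₖ = ∑_{k<M} cₖ (wₖ - wₖ₊₁) + c_M w_M` with `wₖ = sin² βₖ` nonincreasing,
so the weighted sum only grows when each `cₖ` is replaced by `|C_{βₖ}|`. Since the sets
`C_{βₖ}` increase with `k`, the layer-size version counts each vertex of the new layer
`C_{βₖ} \ C_{βₖ₋₁}` with weight `sin² βₖ ≤ s(θ_x)`.
-/

open Finset

theorem sum_range_succ_sub_pred_mul (a b : ℕ → ℝ) (m : ℕ) :
    ∑ k ∈ range (m + 1), (a k - if k = 0 then 0 else a (k - 1)) * b k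
      = ∑ k ∈ range m, a k * (b k - b (k + 1)) + a m * b m := by
  induction m with
  | zero => simp
  | succ m ih =>
    rw [sum_range_succ, ih, sum_range_succ, if_neg m.succ_ne_zero, Nat.add_sub_cancel]
    ring

section AbelInequalities

variable {a b w : ℕ → ℝ} {m : ℕ}

theorem sum_sub_pred_mul_le_of_le (hw : ∀ k < m, w (k + 1) ≤ w k) (hwm : 0 ≤ w m)
    (hab : ∀ k ≤ m, a k ≤ b k) :
    ∑ k ∈ range (m + 1), (a k - if k = 0 then 0 else a (k - 1)) * w k
      ≤ ∑ k ∈ range (m + 1), (b k - if k = 0 then 0 else b (k - 1)) * w k := by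
  rw [sum_range_succ_sub_pred_mul, sum_range_succ_sub_pred_mul]
  gcongr with k hk
  · exact sub_nonneg.2 (hw k (mem_range.1 hk))
  · exact hab k (mem_range.1 hk).le
  · exact hab m le_rfl

theorem mul_le_sum_sub_pred_mul (hw : ∀ k < m, w (k + 1) ≤ w k) (ha : ∀ k < m, 0 ≤ a k) :
    a m * w m ≤ ∑ k ∈ range (m + 1), (a k - if k = 0 then 0 else a (k - 1)) * w k := by
  rw [sum_range_succ_sub_pred_mul, le_add_iff_nonneg_left]
  exact sum_nonneg fun k hk ↦
    mul_nonneg (ha k (mem_range.1 hk)) (sub_nonneg.2 (hw k (mem_range.1 hk)))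

end AbelInequalities

theorem sum_card_sub_pred_mul_le_sum {ι : Type*} [DecidableEq ι] {C : ℕ → Finset ι}
    {f : ι → ℝ} {w : ℕ → ℝ} {m : ℕ} (hC : ∀ k < m, C k ⊆ C (k + 1))
    (hwf : ∀ k ≤ m, ∀ x ∈ C k, w k ≤ f x) :
    ∑ k ∈ range (m + 1), ((#(C k) : ℝ) - if k = 0 then 0 else (#(C (k - 1)) : ℝ)) * w k
      ≤ ∑ x ∈ C m, f x := by
  induction m with
  | zero =>
    simpa using card_nsmul_le_sum (C 0) f (w 0) (hwf 0 le_rfl)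
  | succ m ih =>
    have hsub := hC m m.lt_succ_self
    have hnew : ((#(C (m + 1)) : ℝ) - #(C m)) * w (m + 1) ≤ ∑ x ∈ C (m + 1) \ C m, f x := by
      rw [← Nat.cast_sub (card_le_card hsub), ← card_sdiff_of_subset hsub, ← nsmul_eq_mul]
      exact card_nsmul_le_sum _ f _ fun x hx ↦ hwf (m + 1) le_rfl x (mem_sdiff.1 hx).1
    rw [sum_range_succ, if_neg m.succ_ne_zero, Nat.add_sub_cancel, ← sum_sdiff hsub]
    linarith [ih (fun k hk ↦ hC k (by omega)) (fun k hk ↦ hwf k (by omega))]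

theorem sFun_nonneg (t : ℝ) : 0 ≤ sFun t := by
  unfold sFun
  split_ifs <;> positivity

theorem sin_sq_le_sin_sq {ψ φ : ℝ} (hψ : 0 ≤ ψ) (hφ : φ ≤ Real.pi / 2) (h : ψ ≤ φ) :
    Real.sin ψ ^ 2 ≤ Real.sin φ ^ 2 :=
  pow_le_pow_left₀ (Real.sin_nonneg_of_nonneg_of_le_pi hψ (by linarith [Real.pi_pos]))
    (Real.sin_le_sin_of_le_of_le_pi_div_two (by linarith [Real.pi_pos]) hφ h) 2

theorem sin_sq_le_sFun {ψ t : ℝ} (hψ : 0 ≤ ψ) (ht : ψ ≤ |t|) : Real.sin ψ ^ 2 ≤ sFun t := by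
  unfold sFun
  split_ifs with htπ
  · rw [← sq_abs (Real.sin t), Real.abs_sin_eq_sin_abs_of_abs_le_pi (by linarith [Real.pi_pos])]
    exact sin_sq_le_sin_sq hψ htπ ht
  · exact Real.sin_sq_le_one ψ

theorem Cset_antitone {n : ℕ} (θ : Fin n → ℝ) : Antitone (Cset θ) := fun _ _ h _ hx ↦ by
  simp only [Cset, mem_filter, mem_univ, true_and] at hx ⊢
  exact h.trans hx

theorem sum_s_amplification_general {n : ℕ} (θ : Fin n → ℝ)
    (M : ℕ) (β c : ℕ → ℝ)
    (hβ0 : β 0 = Real.pi / 2) (hβdec : ∀ k < M, β (k + 1) < β k) (hβM : 0 ≤ β M)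
    (hc0 : 0 ≤ c 0) (hcmono : ∀ k < M, c k ≤ c (k + 1))
    (hcard : ∀ k ≤ M, c k ≤ ((Cset θ (β k)).card : ℝ)) :
    (∑ x, sFun (θ x)) ≥
        (∑ k ∈ Finset.range (M + 1),
          (c k - if k = 0 then 0 else c (k - 1)) * Real.sin (β k) ^ 2) ∧
      (∑ k ∈ Finset.range (M + 1),
          (c k - if k = 0 then 0 else c (k - 1)) * Real.sin (β k) ^ 2) ≥
        c M * Real.sin (β M) ^ 2 := by
  have hβanti : AntitoneOn β (Set.Iic M) := antitoneOn_of_succ_le Set.ordConnected_Iic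
    fun k _ _ hk ↦ (hβdec k (Order.succ_le_iff.1 hk)).le
  have hβnonneg : ∀ k ≤ M, 0 ≤ β k := fun k hk ↦ hβM.trans (hβanti hk (Set.mem_Iic.2 le_rfl) hk)
  have hw : ∀ k < M, Real.sin (β (k + 1)) ^ 2 ≤ Real.sin (β k) ^ 2 := fun k hk ↦
    sin_sq_le_sin_sq (hβnonneg (k + 1) hk) (hβ0 ▸ hβanti (Nat.zero_le M) hk.le (Nat.zero_le k))
      (hβdec k hk).le
  have hcmono' : MonotoneOn c (Set.Iic M) := monotoneOn_of_le_succ Set.ordConnected_Iic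
    fun k _ _ hk ↦ hcmono k (Order.succ_le_iff.1 hk)
  have hc : ∀ k < M, 0 ≤ c k := fun k hk ↦
    hc0.trans (hcmono' (Nat.zero_le M) (Set.mem_Iic.2 hk.le) (Nat.zero_le k))
  refine ⟨?_, mul_le_sum_sub_pred_mul (w := fun k ↦ Real.sin (β k) ^ 2) hw hc⟩
  calc ∑ k ∈ range (M + 1), (c k - if k = 0 then 0 else c (k - 1)) * Real.sin (β k) ^ 2
      ≤ ∑ k ∈ range (M + 1), ((#(Cset θ (β k)) : ℝ) - if k = 0 then 0
          else (#(Cset θ (β (k - 1))) : ℝ)) * Real.sin (β k) ^ 2 :=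
        sum_sub_pred_mul_le_of_le hw (sq_nonneg _) hcard
    _ ≤ ∑ x ∈ Cset θ (β M), sFun (θ x) :=
        sum_card_sub_pred_mul_le_sum (fun k hk ↦ Cset_antitone θ (hβdec k hk).le)
          fun k hk x hx ↦ sin_sq_le_sFun (hβnonneg k hk) (mem_filter.1 hx).2
    _ ≤ ∑ x, sFun (θ x) :=
        sum_le_sum_of_subset_of_nonneg (subset_univ _) fun x _ _ ↦ sFun_nonneg (θ x)

theorem sum_s_amplification {n : ℕ} (θ : Fin n → ℝ)
    (hrange : ∀ x, θ x ∈ Set.Ioc (-Real.pi) Real.pi)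
    (M : ℕ) (β c : ℕ → ℝ)
    (hβ0 : β 0 = Real.pi / 2) (hβdec : ∀ k < M, β (k + 1) < β k) (hβM : 0 ≤ β M)
    (hc0 : 0 ≤ c 0) (hcmono : ∀ k < M, c k ≤ c (k + 1))
    (hcard : ∀ k ≤ M, c k ≤ ((Cset θ (β k)).card : ℝ)) :
    (∑ x, sFun (θ x)) ≥
        (∑ k ∈ Finset.range (M + 1),
          (c k - if k = 0 then 0 else c (k - 1)) * Real.sin (β k) ^ 2) ∧
      (∑ k ∈ Finset.range (M + 1),
          (c k - if k = 0 then 0 else c (k - 1)) * Real.sin (β k) ^ 2) ≥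
        c M * Real.sin (β M) ^ 2 :=
  sum_s_amplification_general θ M β c hβ0 hβdec hβM hc0 hcmono hcard
end
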